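/- arXiv:2001.05563 — 2 statements merged into one kernel-verified Lean document; each statement's English description precedes it below -/
import Mathlib

section
/- Let (X_α) be a filtered system of sets with injective transition maps and colimit X. For each α let R^δ(X_α) be the category of finite retractive sets over X_α (objects X_α ⊔ S with S finite, morphisms maps over and under X_α), with functors R^δ(X_α) → R^δ(X_β) and R^δ(X_α) → R^δ(X) induced by pushforward along the structure maps. Then the canonical functor colim_α R^δ(X_α) → R^δ(X) is an equivalence of categories. -/
open CategoryTheory CategoryTheory.Limits

universe u

theorem key_eq_lemma {J : Type u} [SmallCategory J] [IsFiltered J] (F : J ⥤ Type u)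
    {ι : Type u} [Finite ι] (j : J) (a b : ι → F.obj j)
    (h : ∀ i, colimit.ι F j (a i) = colimit.ι F j (b i)) :
    ∃ (k : J) (g : j ⟶ k), ∀ i, F.map g (a i) = F.map g (b i) := by
  classical
  cases nonempty_fintype ι
  suffices H : ∀ A : Finset ι, ∃ (k : J) (g : j ⟶ k), ∀ i ∈ A, F.map g (a i) = F.map g (b i) by
    obtain ⟨k, g, hg⟩ := H Finset.univ
    exact ⟨k, g, fun i => hg i (Finset.mem_univ i)⟩
  intro A
  induction A using Finset.induction with
  | empty => exact ⟨j, 𝟙 j, by simp⟩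
  | @insert i A hi ih =>
    obtain ⟨k, g, hg⟩ := ih
    obtain ⟨k', f₁, f₂, hf⟩ := (Types.FilteredColimit.colimit_eq_iff F).1 (h i)
    -- combine g : j ⟶ k and f₁, f₂ : j ⟶ k'
    let m := IsFiltered.max k k'
    let h₁ : j ⟶ m := g ≫ IsFiltered.leftToMax k k'
    let h₂ : j ⟶ m := f₁ ≫ IsFiltered.rightToMax k k'
    let h₃ : j ⟶ m := f₂ ≫ IsFiltered.rightToMax k k'
    let c := IsFiltered.coeq h₁ h₂
    let c₁ : m ⟶ c := IsFiltered.coeqHom h₁ h₂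
    have hc : h₁ ≫ c₁ = h₂ ≫ c₁ := IsFiltered.coeq_condition h₁ h₂
    let c' := IsFiltered.coeq (h₁ ≫ c₁) (h₃ ≫ c₁)
    let c₂ : c ⟶ c' := IsFiltered.coeqHom (h₁ ≫ c₁) (h₃ ≫ c₁)
    have hc' : (h₁ ≫ c₁) ≫ c₂ = (h₃ ≫ c₁) ≫ c₂ := IsFiltered.coeq_condition _ _
    refine ⟨c', h₁ ≫ c₁ ≫ c₂, fun i' hi' => ?_⟩
    rcases Finset.mem_insert.1 hi' with rfl | hi'
    · have e1 : h₁ ≫ c₁ ≫ c₂ = f₁ ≫ (IsFiltered.rightToMax k k' ≫ c₁ ≫ c₂) := by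
        rw [← Category.assoc, hc]; simp [h₂]
      have e2 : h₁ ≫ c₁ ≫ c₂ = f₂ ≫ (IsFiltered.rightToMax k k' ≫ c₁ ≫ c₂) := by
        have := hc'; simp only [Category.assoc] at this
        rw [this]; simp [h₃]
      conv_lhs => rw [e1]
      conv_rhs => rw [e2]
      simp only [FunctorToTypes.map_comp_apply, hf]
    · have e : h₁ ≫ c₁ ≫ c₂ = g ≫ (IsFiltered.leftToMax k k' ≫ c₁ ≫ c₂) := by simp [h₁]
      rw [e]
      simp only [FunctorToTypes.map_comp_apply, hg i' hi']

/-! Let `(X_α)` be a filtered system of sets with injective transition maps and colimit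
`X`.  The canonical functor `colim_α R^δ(X_α) → R^δ(X)` between categories of finite
retractive sets is an equivalence of categories.

An object of `R^δ(Y)` is a finite retractive set `X ⊔ S`, encoded by a finite set `S`
together with a projection `p : S → Y`; a morphism `(S, p) → (T, q)` over and under `Y`
is encoded by a map `u : S → Y ⊕ T` with `Sum.elim id q ∘ u = p`.  The pushforward
along `g : Y → Z` keeps `S` and postcomposes the projections with `g`.

Since the hom-sets of a filtered colimit of categories are the filtered colimits of the
hom-sets, the statement that the canonical functor `colim_α R^δ(X_α) → R^δ(X)` is an
equivalence of categories is expressed by the following three conditions: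
essential surjectivity (every object of `R^δ(X)` is isomorphic to the pushforward of an
object from some stage; an isomorphism of retractive sets over and under `X` is a
bijection `e` of the complements commuting with the projections), fullness (every
morphism in `R^δ(X)` between pushforwards is the pushforward of a morphism at some
stage) and faithfulness (two morphisms at a stage whose pushforwards to `X` agree
already agree at some later stage). -/
theorem colim_retractive_finite_sets_equivalence
    {J : Type u} [SmallCategory J] [IsFiltered J] (F : J ⥤ Type u)
    (hinj : ∀ {j k : J} (f : j ⟶ k), Function.Injective (F.map f)) :
    -- essential surjectivity
    (∀ (S : Type u), Finite S → ∀ (p : S → colimit F),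
      ∃ (j : J) (S' : Type u) (_ : Finite S') (p' : S' → F.obj j) (e : S' ≃ S),
        ∀ s' : S', p (e s') = colimit.ι F j (p' s')) ∧
    -- fullness
    (∀ (j : J) (S T : Type u), Finite S → Finite T →
      ∀ (p : S → F.obj j) (q : T → F.obj j) (u : S → (colimit F) ⊕ T),
      (∀ s : S, Sum.elim id (colimit.ι F j ∘ q) (u s) = colimit.ι F j (p s)) →
      ∃ (k : J) (g : j ⟶ k) (u' : S → F.obj k ⊕ T),
        (∀ s : S, Sum.elim id (F.map g ∘ q) (u' s) = F.map g (p s)) ∧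
        (∀ s : S, Sum.map (colimit.ι F k) id (u' s) = u s)) ∧
    -- faithfulness
    (∀ (j : J) (S T : Type u), Finite S → Finite T →
      ∀ (p : S → F.obj j) (q : T → F.obj j) (u v : S → F.obj j ⊕ T),
      (∀ s : S, Sum.elim id q (u s) = p s) →
      (∀ s : S, Sum.elim id q (v s) = p s) →
      (∀ s : S, Sum.map (colimit.ι F j) id (u s) = Sum.map (colimit.ι F j) id (v s)) →
      ∃ (k : J) (g : j ⟶ k),
        ∀ s : S, Sum.map (F.map g) id (u s) = Sum.map (F.map g) id (v s)) := by
  classical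
  refine ⟨?_, ?_, ?_⟩
  · -- essential surjectivity
    intro S _ p
    cases nonempty_fintype S
    choose j x hx using fun s => Types.jointly_surjective' (p s)
    obtain ⟨k, hk⟩ := IsFiltered.sup_objs_exists (Finset.image j Finset.univ)
    have g : ∀ s : S, j s ⟶ k := fun s =>
      (hk (Finset.mem_image_of_mem j (Finset.mem_univ s))).some
    refine ⟨k, S, ‹_›, fun s => F.map (g s) (x s), Equiv.refl S, fun s => ?_⟩
    simp only [Equiv.refl_apply]
    rw [Types.Colimit.w_apply, hx]
  · -- fullness
    intro j S T _ _ p q u hu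
    cases nonempty_fintype S
    set a : S → F.obj j := fun s => Sum.elim (fun _ => p s) q (u s) with ha
    have hab : ∀ s, colimit.ι F j (a s) = colimit.ι F j (p s) := by
      intro s
      rcases hus : u s with x | t
      · simp [ha, hus]
      · have := hu s
        rw [hus] at this
        simpa [ha, hus] using this
    obtain ⟨k, g, hg⟩ := key_eq_lemma F j a p hab
    refine ⟨k, g, fun s => Sum.map (fun _ => F.map g (p s)) id (u s), fun s => ?_, fun s => ?_⟩
    · rcases hus : u s with x | t
      · simp [hus]
      · have := hg s
        rw [ha] at this
        simp only [hus, Sum.elim_inr] at this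
        simpa [hus] using this
    · rcases hus : u s with x | t
      · have := hu s
        rw [hus] at this
        simp only [Sum.elim_inl, id_eq] at this
        simp only [hus, Sum.map_inl, id_eq]
        rw [Types.Colimit.w_apply, this]
      · simp [hus]
  · -- faithfulness
    intro j S T _ _ p q u v hu hv huv
    cases nonempty_fintype S
    set a : S → F.obj j := fun s => Sum.elim id (fun _ => p s) (u s) with ha
    set b : S → F.obj j := fun s => Sum.elim id (fun _ => p s) (v s) with hb
    have hab : ∀ s, colimit.ι F j (a s) = colimit.ι F j (b s) := by
      intro s
      have := huv s
      rcases hus : u s with x | t <;> rcases hvs : v s with y | t'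
      · rw [hus, hvs] at this
        simpa [ha, hb, hus, hvs] using this
      · rw [hus, hvs] at this; simp at this
      · rw [hus, hvs] at this; simp at this
      · simp [ha, hb, hus, hvs]
    obtain ⟨k, g, hg⟩ := key_eq_lemma F j a b hab
    refine ⟨k, g, fun s => ?_⟩
    have := huv s
    have hgs := hg s
    simp only [ha, hb] at hgs
    rcases hus : u s with x | t <;> rcases hvs : v s with y | t'
    · simp only [hus, hvs, Sum.elim_inl, id_eq] at hgs
      simpa [hus, hvs] using hgs
    · rw [hus, hvs] at this; simp at this
    · rw [hus, hvs] at this; simp at this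
    · rw [hus, hvs] at this
      simp only [Sum.map_inr, id_eq] at this ⊢
      simpa using this
end

section
/- Let G be a finite group acting on a topological space X and H ≤ G. Consider the directed system of spaces (X × ℝ[G]^n)_H, n ≥ 0, with maps induced by the inclusions v ↦ (v, 0), and the collapse maps (X × ℝ[G]^n)_H → X^H given by projection. Then the induced map colim_n (X × ℝ[G]^n)_H → X^H is a weak homotopy equivalence. -/
open CategoryTheory Metric

universe u

/-! ### Weak homotopy equivalences

A continuous map `f : A → B` is a weak homotopy equivalence iff for every `n ≥ 0` and
every commuting square given by `γ : S^{n-1} → A` and `β : D^n → B` with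
`β|_{S^{n-1}} = f ∘ γ`, there is a lift `γ' : D^n → A` of `γ` such that `f ∘ γ'` is
homotopic to `β` relative to `S^{n-1}`.  (This is the standard lifting
characterization of weak homotopy equivalences, i.e. of maps inducing bijections on
`π₀` and on all homotopy groups at all basepoints.) -/
def IsWeakHomotopyEquiv {A B : Type u} [TopologicalSpace A] [TopologicalSpace B]
    (f : C(A, B)) : Prop :=
  ∀ (n : ℕ) (γ : C(sphere (0 : EuclideanSpace ℝ (Fin n)) 1, A))
    (β : C(closedBall (0 : EuclideanSpace ℝ (Fin n)) 1, B)),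
    (∀ y : sphere (0 : EuclideanSpace ℝ (Fin n)) 1,
      β ⟨y.1, sphere_subset_closedBall y.2⟩ = f (γ y)) →
    ∃ γ' : C(closedBall (0 : EuclideanSpace ℝ (Fin n)) 1, A),
      (∀ y : sphere (0 : EuclideanSpace ℝ (Fin n)) 1,
        γ' ⟨y.1, sphere_subset_closedBall y.2⟩ = γ y) ∧
      Nonempty ((f.comp γ').HomotopyRel β
        {z : closedBall (0 : EuclideanSpace ℝ (Fin n)) 1 |
          (z : EuclideanSpace ℝ (Fin n)) ∈ sphere (0 : EuclideanSpace ℝ (Fin n)) 1})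

/-- The regular representation `ℝ[G]`, modeled as functions `G → ℝ` with `G` permuting
the standard basis by left multiplication: `(g • f) k = f (g⁻¹ k)`. -/
noncomputable instance regularRep {G : Type u} [Group G] : MulAction G (G → ℝ) where
  smul g f := fun k => f (g⁻¹ * k)
  one_smul f := by
    funext k
    show f (1⁻¹ * k) = f k
    rw [inv_one, one_mul]
  mul_smul g h f := by
    funext k
    show f ((g * h)⁻¹ * k) = f (h⁻¹ * (g⁻¹ * k))
    rw [mul_inv_rev, mul_assoc]

variable {G : Type u} [Group G] [Fintype G]
variable {X : Type u} [TopologicalSpace X] [MulAction G X] (H : Subgroup G)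

/-- The `n`-th stage `(X × ℝ[G]ⁿ)_H`: the subspace of `X × ℝ[G]ⁿ` of points with
isotropy group exactly `H` (with `G` acting diagonally). -/
def stage (X : Type u) [TopologicalSpace X] [MulAction G X] (H : Subgroup G) (n : ℕ) :
    TopCat :=
  TopCat.of { p : X × (Fin n → G → ℝ) // MulAction.stabilizer G p = H }

/-- Extending by zero preserves the stabilizer. -/
lemma stabilizer_snoc (x : X) {n : ℕ} (v : Fin n → G → ℝ) :
    MulAction.stabilizer G ((x, Fin.snoc v 0) : X × (Fin (n + 1) → G → ℝ)) =
      MulAction.stabilizer G ((x, v) : X × (Fin n → G → ℝ)) := by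
  ext g
  simp only [MulAction.mem_stabilizer_iff]
  constructor
  · intro hg
    have h1 : g • x = x := congrArg Prod.fst hg
    have h2 : g • (Fin.snoc v 0 : Fin (n + 1) → G → ℝ) = Fin.snoc v 0 :=
      congrArg Prod.snd hg
    refine Prod.ext h1 ?_
    show g • v = v
    funext i
    have h3 := congrFun h2 i.castSucc
    rw [Pi.smul_apply, Fin.snoc_castSucc] at h3
    rw [Pi.smul_apply]
    exact h3
  · intro hg
    have h1 : g • x = x := congrArg Prod.fst hg
    have h2 : g • v = v := congrArg Prod.snd hg
    refine Prod.ext h1 ?_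
    show g • (Fin.snoc v 0 : Fin (n + 1) → G → ℝ) = Fin.snoc v 0
    funext i
    induction i using Fin.lastCases with
    | last =>
      rw [Pi.smul_apply, Fin.snoc_last]
      funext k
      rfl
    | cast j =>
      rw [Pi.smul_apply, Fin.snoc_castSucc]
      exact congrFun h2 j

/-- The inclusion `(X × ℝ[G]ⁿ)_H → (X × ℝ[G]ⁿ⁺¹)_H` induced by `v ↦ (v, 0)`. -/
def stageMap (n : ℕ) : stage X H n ⟶ stage X H (n + 1) :=
  TopCat.ofHom <| ContinuousMap.mk
    (fun p => ⟨(p.1.1, Fin.snoc p.1.2 0), by rw [stabilizer_snoc]; exact p.2⟩)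
    (by
      apply Continuous.subtype_mk
      refine Continuous.prodMk (continuous_subtype_val.fst) ?_
      apply continuous_pi
      intro i
      induction i using Fin.lastCases with
      | last =>
        simp only [Fin.snoc_last]
        exact continuous_const
      | cast j =>
        simp only [Fin.snoc_castSucc]
        exact (continuous_apply j).comp continuous_subtype_val.snd)

/-- The directed system `(X × ℝ[G]ⁿ)_H`, `n ≥ 0`. -/
noncomputable def stageFunctor : ℕ ⥤ TopCat := Functor.ofSequence (fun n => stageMap (X := X) H n)

/-- The `H`-fixed points `X^H`. -/
def fixedH (Y : Type u) [TopologicalSpace Y] [MulAction G Y] (K : Subgroup G) : TopCat :=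
  TopCat.of { y : Y // ∀ g ∈ K, g • y = y }

/-- The collapse map `(X × ℝ[G]ⁿ)_H → X^H`, projecting to `X` (induced by the collapse
maps `V → *`). -/
def collapse (n : ℕ) : stage X H n ⟶ fixedH X H :=
  TopCat.ofHom <| ContinuousMap.mk
    (fun p => ⟨p.1.1, fun g hg => by
      have hmem : g ∈ MulAction.stabilizer G p.1 := p.2.symm ▸ hg
      exact congrArg Prod.fst (MulAction.mem_stabilizer_iff.mp hmem)⟩)
    (by
      apply Continuous.subtype_mk
      exact continuous_subtype_val.fst)

/-- The cocone over the directed system given by the collapse maps. -/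
noncomputable def collapseCocone : Limits.Cocone (stageFunctor (X := X) H) where
  pt := fixedH X H
  ι :=
    { app := collapse H
      naturality := by
        have key : ∀ (n m : ℕ) (h : n ≤ m),
            (stageFunctor (X := X) H).map (homOfLE h) ≫ collapse H m = collapse H n := by
          intro n m h
          induction m, h using Nat.le_induction with
          | base =>
            rw [show (homOfLE (le_refl n) : n ⟶ n) = 𝟙 n from rfl, CategoryTheory.Functor.map_id]
            exact Category.id_comp _
          | succ m hnm ih =>
            rw [← homOfLE_comp hnm (Nat.le_succ m), Functor.map_comp]
            refine (Category.assoc _ _ _).trans ?_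
            have hstep : (stageFunctor (X := X) H).map (homOfLE (Nat.le_succ m)) =
                stageMap (X := X) H m := Functor.ofSequence_map_homOfLE_succ _ m
            rw [hstep]
            have hcoll : stageMap (X := X) H m ≫ collapse H (m + 1) = collapse H m := rfl
            erw [hcoll, ih]
        intro n m f
        have hf : f = homOfLE (leOfHom f) := rfl
        rw [hf, key, Functor.const_obj_map]
        exact (Category.comp_id _).symm }


/-!
Write `f` for the collapse map `colim_n (X × ℝ[G]ⁿ)_H → X^H` and `1_H ∈ ℝ[G]` for the indicator
of `H`, whose isotropy group is exactly `H`. Then `s : x ↦ (x, 1_H)` is a section of `f`, and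
`s ∘ f` is homotopic to the identity through maps over `X^H`: on the `n`-th stage, slide
`(v₀, …, vₙ₋₁, 0)` linearly to `(0, v₀, …, vₙ₋₁)`, fade in `1_H` in the freed slot `0`, and fade
out the `vᵢ`. Along the way the isotropy stays exactly `H`: while sliding, slot `i` carries
`a • vᵢ + b • vᵢ₋₁`, so an element fixing the point fixes `v₀, v₁, …` in turn; afterwards `1_H`
has positive weight in slot `0`. These homotopies commute with `v ↦ (v, 0)`, so they glue to the
colimit.

A map with a section `s` and such a fiberwise homotopy `K` is a weak homotopy equivalence: given
`γ : Sⁿ⁻¹ → A` and `β : Dⁿ → B` with `β|Sⁿ⁻¹ = f ∘ γ`, the lift is `s ∘ β ∘ ρ` on the half-radius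
ball and `K` run backwards along `γ` on the outer annulus, where `ρ` stretches the inner ball onto
`Dⁿ` and retracts the annulus radially onto `Sⁿ⁻¹`; its image under `f` is `β ∘ ρ`, which is
homotopic to `β` relative to `Sⁿ⁻¹` by a straight-line homotopy.
-/

open scoped unitInterval

section ConvexHomotopy

variable {E Z : Type*} [NormedAddCommGroup E] [NormedSpace ℝ E] [TopologicalSpace Z]

def Convex.homotopyRel {s : Set E} (hs : Convex ℝ s) {f g : C(Z, s)} {S : Set Z}
    (hfg : ∀ z ∈ S, f z = g z) : f.HomotopyRel g S where
  toFun p := ⟨AffineMap.lineMap (f p.2 : E) (g p.2) (p.1 : ℝ),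
    hs.lineMap_mem (f p.2).2 (g p.2).2 ⟨p.1.2.1, p.1.2.2⟩⟩
  continuous_toFun := by
    simp only [AffineMap.lineMap_apply_module]
    fun_prop
  map_zero_left z := by simp
  map_one_left z := by simp
  prop' t z hz := by simp [hfg z hz]

end ConvexHomotopy

theorem continuous_dite_le {Z W : Type*} [TopologicalSpace Z] [TopologicalSpace W] {φ : Z → ℝ}
    (hφ : Continuous φ) {c : ℝ} {f : {z // φ z ≤ c} → W} {g : {z // c ≤ φ z} → W}
    (hf : Continuous f) (hg : Continuous g) (hfg : ∀ z h₁ h₂, f ⟨z, h₁⟩ = g ⟨z, h₂⟩) :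
    Continuous fun z => if h : φ z ≤ c then f ⟨z, h⟩ else g ⟨z, le_of_not_ge h⟩ := by
  rw [← continuousOn_univ]
  refine (ContinuousOn.union_of_isClosed (s := {z | φ z ≤ c}) (t := {z | c ≤ φ z}) ?_ ?_
    (isClosed_le hφ continuous_const) (isClosed_le continuous_const hφ)).mono
    fun z _ => le_total (φ z) c
  · rw [continuousOn_iff_continuous_domRestrict]
    exact hf.congr fun z => by
      simp only [Set.domRestrict_apply, dif_pos (show φ z ≤ c from z.2)]
  · rw [continuousOn_iff_continuous_domRestrict]
    refine hg.congr fun z => ?_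
    simp only [Set.domRestrict_apply]
    split_ifs with h
    · exact (hfg _ h z.2).symm
    · rfl

section RadialSquash

variable {E : Type*} [NormedAddCommGroup E] [NormedSpace ℝ E]

/-- `2 • z` on the ball of radius `1 / 2`, and `z / ‖z‖` outside it. -/
noncomputable def radialSquash (z : E) : E := (2 / max 1 (2 * ‖z‖)) • z

@[fun_prop]
theorem continuous_radialSquash : Continuous (radialSquash (E := E)) :=
  (continuous_const.div (by fun_prop) fun _ => (zero_lt_one.trans_le (le_max_left _ _)).ne').smul
    continuous_id

theorem norm_radialSquash (z : E) : ‖radialSquash z‖ = 2 * ‖z‖ / max 1 (2 * ‖z‖) := by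
  have : 0 < max 1 (2 * ‖z‖) := zero_lt_one.trans_le (le_max_left _ _)
  rw [radialSquash, norm_smul, Real.norm_of_nonneg (by positivity)]
  ring

theorem norm_radialSquash_le_one (z : E) : ‖radialSquash z‖ ≤ 1 := by
  rw [norm_radialSquash, div_le_one (zero_lt_one.trans_le (le_max_left _ _))]
  exact le_max_right _ _

theorem norm_radialSquash_of_half_le {z : E} (hz : 1 / 2 ≤ ‖z‖) : ‖radialSquash z‖ = 1 := by
  rw [norm_radialSquash, max_eq_right (by linarith), div_self (by linarith)]

theorem radialSquash_of_norm_eq_one {z : E} (hz : ‖z‖ = 1) : radialSquash z = z := by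
  rw [radialSquash, hz, max_eq_right (by norm_num)]
  norm_num

noncomputable def ballSquash : C(closedBall (0 : E) 1, closedBall (0 : E) 1) :=
  ⟨fun z => ⟨radialSquash (z : E), mem_closedBall_zero_iff.2 (norm_radialSquash_le_one _)⟩,
    (continuous_radialSquash.comp continuous_subtype_val).subtype_mk _⟩

end RadialSquash

section FiberwiseHomotopy

variable {A B E : Type*} [TopologicalSpace A] [TopologicalSpace B]
  [NormedAddCommGroup E] [NormedSpace ℝ E]

theorem exists_extension_comp_eq_comp_ballSquash {f : C(A, B)} {s : C(B, A)}
    (hs : ∀ b, f (s b) = b) (K : (ContinuousMap.id A).Homotopy (s.comp f))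
    (hK : ∀ t a, f (K (t, a)) = f a) (γ : C(sphere (0 : E) 1, A))
    (β : C(closedBall (0 : E) 1, B))
    (hβ : ∀ y : sphere (0 : E) 1, β ⟨y, sphere_subset_closedBall y.2⟩ = f (γ y)) :
    ∃ γ' : C(closedBall (0 : E) 1, A),
      (∀ y : sphere (0 : E) 1, γ' ⟨y, sphere_subset_closedBall y.2⟩ = γ y) ∧
        f.comp γ' = β.comp ballSquash := by
  let onSphere (z : {z : closedBall (0 : E) 1 // 1 / 2 ≤ ‖(z : E)‖}) : sphere (0 : E) 1 :=
    ⟨radialSquash (z : E), mem_sphere_zero_iff_norm.2 (norm_radialSquash_of_half_le z.2)⟩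
  let time (z : closedBall (0 : E) 1) : I := Set.projIcc 0 1 zero_le_one (2 - 2 * ‖(z : E)‖)
  let inner (z : {z : closedBall (0 : E) 1 // ‖(z : E)‖ ≤ 1 / 2}) : A := s (β (ballSquash z))
  let outer (z : {z : closedBall (0 : E) 1 // 1 / 2 ≤ ‖(z : E)‖}) : A :=
    K (time z, γ (onSphere z))
  have hmatch : ∀ z h₁ h₂, inner ⟨z, h₁⟩ = outer ⟨z, h₂⟩ := by
    intro z h₁ h₂
    have hz : ‖(z : E)‖ = 1 / 2 := le_antisymm h₁ h₂
    have htime : time z = 1 := Subtype.ext (by simp [time, Set.projIcc, hz]; norm_num)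
    simp only [inner, outer, htime, K.apply_one, ContinuousMap.comp_apply, ← hβ]
    rfl
  have hinner : Continuous inner := by unfold inner; fun_prop
  have houter : Continuous outer := by unfold outer onSphere time; fun_prop
  refine ⟨⟨fun z => if h : ‖(z : E)‖ ≤ 1 / 2 then inner ⟨z, h⟩ else outer ⟨z, le_of_not_ge h⟩,
    continuous_dite_le (by fun_prop) hinner houter hmatch⟩, fun y => ?_, ?_⟩
  · have hy : ‖(y : E)‖ = 1 := mem_sphere_zero_iff_norm.1 y.2
    have htime : time ⟨y, sphere_subset_closedBall y.2⟩ = 0 :=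
      Subtype.ext (by simp [time, Set.projIcc, hy])
    have hsphere : onSphere ⟨⟨y, sphere_subset_closedBall y.2⟩, by norm_num [hy]⟩ = y :=
      Subtype.ext (radialSquash_of_norm_eq_one hy)
    simp only [ContinuousMap.coe_mk, hy, dif_neg (by norm_num : ¬ (1 : ℝ) ≤ 1 / 2), outer, htime,
      hsphere, K.apply_zero, ContinuousMap.id_apply]
  · ext z
    simp only [ContinuousMap.comp_apply, ContinuousMap.coe_mk]
    split_ifs
    · exact hs _
    · exact (hK _ _).trans (hβ _).symm

end FiberwiseHomotopy

theorem IsWeakHomotopyEquiv.of_fiberwise_homotopy {A B : Type u} [TopologicalSpace A]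
    [TopologicalSpace B] {f : C(A, B)} {s : C(B, A)} (hs : ∀ b, f (s b) = b)
    (K : (ContinuousMap.id A).Homotopy (s.comp f)) (hK : ∀ t a, f (K (t, a)) = f a) :
    IsWeakHomotopyEquiv f := by
  intro N γ β hβ
  obtain ⟨γ', hγ', hcomp⟩ := exists_extension_comp_eq_comp_ballSquash hs K hK γ β hβ
  have hρ : ∀ z ∈ {z : closedBall (0 : EuclideanSpace ℝ (Fin N)) 1 |
      (z : EuclideanSpace ℝ (Fin N)) ∈ sphere 0 1}, ballSquash z = ContinuousMap.id _ z :=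
    fun z hz => Subtype.ext (radialSquash_of_norm_eq_one (mem_sphere_zero_iff_norm.1 hz))
  exact ⟨γ', hγ', ⟨(((convex_closedBall 0 1).homotopyRel hρ).compContinuousMap β).cast
    hcomp.symm β.comp_id⟩⟩

section SequentialColimit

open Limits

variable (F : ℕ ⥤ TopCat.{u}) {Y : Type u} [TopologicalSpace Y]

/-- Curried, the family is a cocone with vertex `C(I, Y)`; uncurrying the induced map is
continuous because `I` is locally compact. -/
noncomputable def unitIntervalProdColimitDesc (φ : ∀ n, C(I × F.obj n, Y))
    (hφ : ∀ n t x, φ (n + 1) (t, F.map (homOfLE (n.le_add_right 1)) x) = φ n (t, x)) :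
    C(I × (colimit F : TopCat), Y) :=
  let c : Cocone F :=
    { pt := TopCat.of C(I, Y)
      ι := NatTrans.ofSequence (fun n => TopCat.ofHom ((φ n).comp ContinuousMap.prodSwap).curry)
        fun n => by
          ext x : 2
          exact ContinuousMap.ext fun t => hφ n t x }
  (colimit.desc F c).hom.uncurry.comp ContinuousMap.prodSwap

theorem unitIntervalProdColimitDesc_ι (φ : ∀ n, C(I × F.obj n, Y))
    (hφ : ∀ n t x, φ (n + 1) (t, F.map (homOfLE (n.le_add_right 1)) x) = φ n (t, x))
    (n : ℕ) (t : I) (x : F.obj n) :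
    unitIntervalProdColimitDesc F φ hφ (t, colimit.ι F n x) = φ n (t, x) := by
  simp [unitIntervalProdColimitDesc]

end SequentialColimit

section Slide

variable {Γ V : Type*} [Group Γ]

theorem Fin.smul_cons {M : Type*} [SMul M V] {n : ℕ} (c : M) (y : V) (v : Fin n → V) :
    c • (Fin.cons y v : Fin (n + 1) → V) = Fin.cons (c • y) (c • v) :=
  Fin.comp_cons (c • ·) y v

variable [AddCommGroup V] [DistribMulAction Γ V]

theorem Fin.smul_snoc_zero {n : ℕ} (g : Γ) (v : Fin n → V) :
    g • (Fin.snoc v 0 : Fin (n + 1) → V) = Fin.snoc (g • v) 0 :=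
  (Fin.comp_snoc (g • ·) v 0).trans (by rw [smul_zero]; rfl)

theorem Fin.cons_add_cons {n : ℕ} (x y : V) (v w : Fin n → V) :
    (Fin.cons x v : Fin (n + 1) → V) + Fin.cons y w = Fin.cons (x + y) (v + w) :=
  Matrix.cons_add_cons x v y w

theorem snoc_cons_zero {n : ℕ} (u : V) :
    (Fin.snoc (Fin.cons u 0 : Fin (n + 1) → V) 0 : Fin (n + 2) → V) = Fin.cons u 0 := by
  rw [← Fin.cons_snoc_eq_snoc_cons]
  congr 1
  ext i
  induction i using Fin.lastCases <;> simp

theorem stabilizer_prod_cons_zero {Y : Type*} [MulAction Γ Y] (y : Y) (u : V) (n : ℕ) :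
    MulAction.stabilizer Γ (y, (Fin.cons u 0 : Fin (n + 1) → V)) =
      MulAction.stabilizer Γ y ⊓ MulAction.stabilizer Γ u := by
  ext g
  simp only [Subgroup.mem_inf, MulAction.mem_stabilizer_iff, Prod.smul_mk, Prod.mk.injEq,
    Fin.smul_cons, smul_zero, Fin.cons_inj, and_true]

variable [Module ℝ V]

/-- Slot `i` of `slide a b u v` is `a • vᵢ + b • vᵢ₋₁`, with `v₋₁ = u` and `vₙ = 0`. -/
def slide {n : ℕ} (a b : ℝ) (u : V) (v : Fin n → V) : Fin (n + 1) → V :=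
  a • (Fin.snoc v 0 : Fin (n + 1) → V) + b • (Fin.cons u v : Fin (n + 1) → V)

theorem slide_cons {n : ℕ} (a b : ℝ) (u v₀ : V) (v : Fin n → V) :
    slide a b u (Fin.cons v₀ v) = Fin.cons (a • v₀ + b • u) (slide a b v₀ v) := by
  simp only [slide, ← Fin.cons_snoc_eq_snoc_cons, Fin.smul_cons, Fin.cons_add_cons]

variable [SMulCommClass Γ ℝ V]

theorem smul_slide {n : ℕ} (g : Γ) (a b : ℝ) (u : V) (v : Fin n → V) :
    g • slide a b u v = slide a b (g • u) (g • v) := by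
  simp only [slide, smul_add, smul_comm g, Fin.smul_snoc_zero, Fin.smul_cons]

theorem smul_eq_of_smul_slide_eq {g : Γ} {a b : ℝ} (ha : a ≠ 0) :
    ∀ {n : ℕ} {u : V} {v : Fin n → V}, g • u = u → g • slide a b u v = slide a b u v →
      g • v = v
  | 0, _, _, _, _ => Subsingleton.elim _ _
  | n + 1, u, v, hu, h => by
    obtain ⟨v₀, v', rfl⟩ : ∃ v₀ v', v = Fin.cons v₀ v' := ⟨_, _, (Fin.cons_self_tail v).symm⟩
    rw [slide_cons, Fin.smul_cons, Fin.cons_inj, smul_add, smul_comm g, smul_comm g, hu,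
      add_left_inj] at h
    have hv₀ : g • v₀ = v₀ := smul_right_injective V ha h.1
    rw [Fin.smul_cons, hv₀, smul_eq_of_smul_slide_eq ha hv₀ h.2]

theorem smul_eq_of_smul_slide_zero_eq {g : Γ} {a b : ℝ} (hab : a ≠ 0 ∨ b ≠ 0) {n : ℕ}
    {v : Fin n → V} (h : g • slide a b 0 v = slide a b 0 v) : g • v = v := by
  rcases eq_or_ne a 0 with rfl | ha
  · have hb := hab.resolve_left (not_not.2 rfl)
    rw [smul_slide, smul_zero] at h
    simp only [slide, zero_smul, zero_add] at h
    exact (Fin.cons_inj.1 (smul_right_injective _ hb h)).2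
  · exact smul_eq_of_smul_slide_eq ha (smul_zero g) h

end Slide

section Contraction

variable {Γ V : Type*} [Group Γ] [AddCommGroup V] [Module ℝ V]

/-- Slide `v` one slot to the right on `[0, 1/3]`, raise the weight of `u` in slot `0` to `1` on
`[1/3, 2/3]`, and fade out `v` on `[2/3, 1]`. Slot `0`, unlike slot `n`, is unaffected by
`v ↦ Fin.snoc v 0`, which makes the path compatible with the inclusions of the stages. -/
noncomputable def contractionPath {n : ℕ} (u : V) (t : ℝ) (v : Fin n → V) : Fin (n + 1) → V :=
  slide (max 0 (1 - 3 * t)) (min 1 (min (3 * t) (3 - 3 * t))) 0 v +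
    min 1 (max 0 (3 * t - 1)) • (Fin.cons u 0 : Fin (n + 1) → V)

theorem contractionPath_zero {n : ℕ} (u : V) (v : Fin n → V) :
    contractionPath u 0 v = Fin.snoc v 0 := by
  norm_num [contractionPath, slide]

theorem contractionPath_one {n : ℕ} (u : V) (v : Fin n → V) :
    contractionPath u 1 v = Fin.cons u 0 := by
  norm_num [contractionPath, slide]

theorem snoc_contractionPath {n : ℕ} (u : V) (t : ℝ) (v : Fin n → V) :
    (Fin.snoc (contractionPath u t v) 0 : Fin (n + 2) → V) =
      contractionPath u t (Fin.snoc v 0 : Fin (n + 1) → V) := by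
  ext i
  induction i using Fin.lastCases with
  | last => simp [contractionPath, slide, Fin.cons_last]
  | cast i =>
    rw [Fin.snoc_castSucc]
    induction i using Fin.cases with
    | zero => simp [contractionPath, slide]
    | succ i =>
      simp only [contractionPath, slide, Pi.add_apply, Pi.smul_apply, Fin.snoc_castSucc]
      simp only [← Fin.succ_castSucc, Fin.cons_succ, Fin.snoc_castSucc, Pi.zero_apply]

theorem continuous_contractionPath [TopologicalSpace V] [IsTopologicalAddGroup V]
    [ContinuousSMul ℝ V] {n : ℕ} (u : V) :
    Continuous fun p : ℝ × (Fin n → V) => contractionPath u p.1 p.2 := by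
  unfold contractionPath slide
  have : Continuous fun p : ℝ × (Fin n → V) => (Fin.snoc p.2 0 : Fin (n + 1) → V) :=
    continuous_snd.finSnoc (A := fun _ => V) continuous_const
  have : Continuous fun p : ℝ × (Fin n → V) => (Fin.cons 0 p.2 : Fin (n + 1) → V) :=
    continuous_const.finCons (A := fun _ => V) continuous_snd
  fun_prop

variable [DistribMulAction Γ V] [SMulCommClass Γ ℝ V]

theorem smul_contractionPath {n : ℕ} (g : Γ) (u : V) (t : ℝ) (v : Fin n → V) :
    g • contractionPath u t v = contractionPath (g • u) t (g • v) := by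
  simp only [contractionPath, smul_add, smul_slide, smul_zero, smul_comm g, Fin.smul_cons]

theorem stabilizer_prod_contractionPath {Y : Type*} [MulAction Γ Y] {n : ℕ} {y : Y} {u : V}
    {v : Fin n → V} (hv : MulAction.stabilizer Γ (y, v) = MulAction.stabilizer Γ u) (t : ℝ) :
    MulAction.stabilizer Γ (y, contractionPath u t v) = MulAction.stabilizer Γ u := by
  ext g
  refine ⟨fun hg => ?_, fun hg => ?_⟩
  · obtain ⟨hy, hw⟩ : g • y = y ∧ g • contractionPath u t v = contractionPath u t v := by
      simpa using hg
    by_cases ht : 3 * t ≤ 1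
    · have hc : min 1 (max 0 (3 * t - 1)) = 0 := by simp [ht]
      rw [contractionPath, hc, zero_smul, add_zero] at hw
      have hab : max 0 (1 - 3 * t) ≠ 0 ∨ min 1 (min (3 * t) (3 - 3 * t)) ≠ 0 := by
        rcases ht.lt_or_eq with ht | ht
        · exact .inl (by simp [ht])
        · exact .inr (by norm_num [ht])
      rw [← hv, MulAction.mem_stabilizer_iff, Prod.smul_mk,
        smul_eq_of_smul_slide_zero_eq hab hw, hy]
    · have ha : max 0 (1 - 3 * t) = 0 := max_eq_left (by linarith)
      have hc : min 1 (max 0 (3 * t - 1)) ≠ 0 :=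
        (lt_min one_pos (lt_max_of_lt_right (by linarith))).ne'
      have h₀ := congrFun hw 0
      simp only [contractionPath, slide, ha, Pi.smul_apply, Pi.add_apply, Fin.cons_zero,
        zero_smul, smul_zero, zero_add, smul_comm g] at h₀
      exact smul_right_injective V hc h₀
  · obtain ⟨hy, hv'⟩ : g • y = y ∧ g • v = v := by simpa [← hv] using hg
    rw [MulAction.mem_stabilizer_iff, Prod.smul_mk, smul_contractionPath, hy, hv',
      MulAction.mem_stabilizer_iff.1 hg]

end Contraction

section RegularRepresentation

variable {G : Type*} [Group G] (H : Subgroup G)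

noncomputable instance : DistribMulAction G (G → ℝ) :=
  { regularRep with
    smul_zero := fun _ => rfl
    smul_add := fun _ _ _ => rfl }

instance : SMulCommClass G ℝ (G → ℝ) := ⟨fun _ _ _ => rfl⟩

theorem regularRep_smul_apply (g : G) (f : G → ℝ) (k : G) : (g • f) k = f (g⁻¹ * k) := rfl

noncomputable def indicatorVector : G → ℝ := (H : Set G).indicator 1

theorem stabilizer_indicatorVector : MulAction.stabilizer G (indicatorVector H) = H := by
  ext g
  rw [MulAction.mem_stabilizer_iff]
  refine ⟨fun h => ?_, fun hg => funext fun k => ?_⟩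
  · have h₁ := congrFun h g
    rw [regularRep_smul_apply, inv_mul_cancel] at h₁
    by_contra hg
    simp [indicatorVector, hg] at h₁
  · classical
    rw [regularRep_smul_apply]
    simp only [indicatorVector, Set.indicator_apply, SetLike.mem_coe,
      H.mul_mem_cancel_left (H.inv_mem hg), Pi.one_apply]

theorem stabilizer_prod_cons_indicatorVector {Y : Type*} [MulAction G Y] {y : Y}
    (hy : ∀ g ∈ H, g • y = y) (n : ℕ) :
    MulAction.stabilizer G (y, (Fin.cons (indicatorVector H) 0 : Fin (n + 1) → G → ℝ)) = H := by
  rw [stabilizer_prod_cons_zero, stabilizer_indicatorVector]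
  exact inf_eq_right.2 hy

end RegularRepresentation

section Stages

variable {G : Type u} [Group G] {X : Type u} [TopologicalSpace X] [MulAction G X]
  (H : Subgroup G)

noncomputable def stageContraction (n : ℕ) : C(I × stage X H n, stage X H (n + 1)) where
  toFun p := ⟨(p.2.1.1, contractionPath (indicatorVector H) p.1 p.2.1.2),
    (stabilizer_prod_contractionPath (p.2.2.trans (stabilizer_indicatorVector H).symm) _).trans
      (stabilizer_indicatorVector H)⟩
  continuous_toFun := by
    have hp : Continuous fun p : I × stage X H n => p.2.1 := by fun_prop
    exact (hp.fst.prodMk ((continuous_contractionPath _).comp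
      ((continuous_subtype_val.comp continuous_fst).prodMk hp.snd))).subtype_mk _

noncomputable def fixedToStage (n : ℕ) : C(fixedH X H, stage X H (n + 1)) where
  toFun x := ⟨(x.1, Fin.cons (indicatorVector H) 0), stabilizer_prod_cons_indicatorVector H x.2 n⟩
  continuous_toFun := (continuous_subtype_val.prodMk continuous_const).subtype_mk _

theorem stageContraction_one (n : ℕ) (p : stage X H n) :
    stageContraction H n (1, p) = fixedToStage H n (collapse H n p) :=
  Subtype.ext (Prod.ext rfl (contractionPath_one _ _))

end Stages

section Colimit

open Limits

theorem stageFunctor_map_succ (n : ℕ) :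
    (stageFunctor (X := X) H).map (homOfLE (n.le_add_right 1)) = stageMap H n :=
  Functor.ofSequence_map_homOfLE_succ _ n

theorem ι_stageMap_apply (n : ℕ) (p : stage X H n) :
    colimit.ι (stageFunctor H) (n + 1) (stageMap H n p) = colimit.ι (stageFunctor H) n p := by
  rw [← stageFunctor_map_succ]
  exact colimit.w_apply (stageFunctor H) _ p

theorem stageContraction_zero (n : ℕ) (p : stage X H n) :
    stageContraction H n (0, p) = stageMap H n p :=
  Subtype.ext (Prod.ext rfl (contractionPath_zero _ _))

theorem stageContraction_stageMap (n : ℕ) (t : I) (p : stage X H n) :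
    stageContraction H (n + 1) (t, stageMap H n p) =
      stageMap H (n + 1) (stageContraction H n (t, p)) :=
  Subtype.ext (Prod.ext rfl (snoc_contractionPath _ _ _).symm)

theorem stageMap_fixedToStage (n : ℕ) (x : fixedH X H) :
    stageMap H (n + 1) (fixedToStage H n x) = fixedToStage H (n + 1) x :=
  Subtype.ext (Prod.ext rfl (snoc_cons_zero _))

noncomputable def colimitSection :
    C(fixedH X H, (colimit (stageFunctor (X := X) H) : TopCat)) :=
  (colimit.ι (stageFunctor H) 1).hom.comp (fixedToStage H 0)

theorem ι_fixedToStage (n : ℕ) (x : fixedH X H) :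
    colimit.ι (stageFunctor H) (n + 1) (fixedToStage H n x) = colimitSection H x := by
  induction n with
  | zero => rfl
  | succ n ih => rw [← stageMap_fixedToStage, ι_stageMap_apply, ih]

theorem desc_collapseCocone_colimitSection (y : fixedH X H) :
    colimit.desc (stageFunctor H) (collapseCocone H) (colimitSection H y) = y :=
  colimit.ι_desc_apply (collapseCocone H) 1 _

noncomputable def colimitContraction :
    C(I × (colimit (stageFunctor (X := X) H) : TopCat),
      (colimit (stageFunctor (X := X) H) : TopCat)) :=
  unitIntervalProdColimitDesc (stageFunctor H)
    (fun n => (colimit.ι (stageFunctor H) (n + 1)).hom.comp (stageContraction H n))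
    fun n t p => by
      rw [stageFunctor_map_succ]
      exact (congrArg (colimit.ι (stageFunctor H) (n + 2))
        (stageContraction_stageMap H n t p)).trans (ι_stageMap_apply H _ _)

theorem colimitContraction_ι (n : ℕ) (t : I) (p : (stageFunctor (X := X) H).obj n) :
    colimitContraction H (t, colimit.ι (stageFunctor H) n p) =
      colimit.ι (stageFunctor H) (n + 1) (stageContraction H n (t, p)) :=
  unitIntervalProdColimitDesc_ι (stageFunctor H) _ _ n t p

theorem desc_collapseCocone_colimitContraction (t : I)
    (x : (colimit (stageFunctor (X := X) H) : TopCat)) :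
    colimit.desc (stageFunctor H) (collapseCocone H) (colimitContraction H (t, x)) =
      colimit.desc (stageFunctor H) (collapseCocone H) x := by
  obtain ⟨n, p, rfl⟩ := Concrete.colimit_exists_rep (stageFunctor H) x
  rw [colimitContraction_ι]
  exact (colimit.ι_desc_apply (collapseCocone H) (n + 1) _).trans
    (colimit.ι_desc_apply (collapseCocone H) n p).symm

noncomputable def colimitHomotopy :
    (ContinuousMap.id _).Homotopy
      ((colimitSection H).comp (colimit.desc (stageFunctor (X := X) H) (collapseCocone H)).hom)
    where
  toContinuousMap := colimitContraction H
  map_zero_left x := by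
    obtain ⟨n, p, rfl⟩ := Concrete.colimit_exists_rep (stageFunctor H) x
    rw [ContinuousMap.toFun_eq_coe, colimitContraction_ι]
    exact (congrArg (colimit.ι (stageFunctor H) (n + 1)) (stageContraction_zero H n p)).trans
      (ι_stageMap_apply H n p)
  map_one_left x := by
    obtain ⟨n, p, rfl⟩ := Concrete.colimit_exists_rep (stageFunctor H) x
    rw [ContinuousMap.toFun_eq_coe, colimitContraction_ι]
    exact (congrArg (colimit.ι (stageFunctor H) (n + 1)) (stageContraction_one H n p)).trans
      ((ι_fixedToStage H n _).trans
        (congrArg (colimitSection H) (colimit.ι_desc_apply (collapseCocone H) n p).symm))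

end Colimit

/-- Let a finite group `G` act on a space `X` and let `H ≤ G`.  The map
`colim_n (X × ℝ[G]ⁿ)_H → X^H` induced by the collapse maps is a weak homotopy
equivalence. -/
theorem colim_isotropy_to_fixed_is_weak_equivalence :
    IsWeakHomotopyEquiv
      (show C((Limits.colimit (stageFunctor (X := X) H) : TopCat), (fixedH X H : TopCat)) from
        (Limits.colimit.desc (stageFunctor (X := X) H) (collapseCocone H)).hom) :=
  IsWeakHomotopyEquiv.of_fiberwise_homotopy (desc_collapseCocone_colimitSection H)
    (colimitHomotopy H) (desc_collapseCocone_colimitContraction H)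
end
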